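/- Let u(x) = ∑_{k ∈ F} c_k e^{2πi k·x} be a trigonometric polynomial with finite F ⊂ ℤ^d, and let ψ_1,…,ψ_p : ℤ^d → ℂ be arbitrary functions (multiplier symbols evaluated at frequencies). For each i define (A_i u)(x) = ∑_{k ∈ F} c_k ψ_i(k) e^{2πi k·x} and set u_n^i(x) = (A_i u)(nx). Then for every continuous compactly supported φ, lim_{n→∞} ∫ φ(x) ∏_{i=1}^p u_n^i(x) dx = ( ∑_{k_1,…,k_p ∈ F, k_1+⋯+k_p=0} ∏_{i=1}^p c_{k_i} ψ_i(k_i) ) · ∫ φ(x) dx. -/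

import Mathlib

/-!
Multiplying out the product, the integrand becomes a finite sum over frequency tuples
`(k_1, …, k_p) ∈ F^p` of `φ(x) e^{2πi n (k_1 + ⋯ + k_p)·x}`. Resonant tuples (`∑ k_i = 0`)
contribute `∫ φ` for every `n`; for the others, the Riemann–Lebesgue lemma applied to the linear forms
`x ↦ n (∑ k_i)·x`, whose norms tend to infinity, sends the integral to `0`.
-/

open MeasureTheory Filter

noncomputable def expc {d : ℕ} (k : Fin d → ℤ) (x : Fin d → ℝ) : ℂ :=
  Complex.exp (2 * Real.pi * Complex.I * (∑ i, (k i : ℝ) * x i))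

open Real

section

variable {d : ℕ}

noncomputable def frequencyForm (k : Fin d → ℤ) : StrongDual ℝ (Fin d → ℝ) :=
  ∑ j, (k j : ℝ) • ContinuousLinearMap.proj j

theorem frequencyForm_apply (k : Fin d → ℤ) (x : Fin d → ℝ) :
    frequencyForm k x = ∑ j, (k j : ℝ) * x j := by
  simp [frequencyForm]

theorem frequencyForm_single (k : Fin d → ℤ) (j : Fin d) :
    frequencyForm k (Pi.single j 1) = k j := by
  simp [frequencyForm_apply, Pi.single_apply]

theorem frequencyForm_ne_zero {k : Fin d → ℤ} (hk : k ≠ 0) : frequencyForm k ≠ 0 := by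
  obtain ⟨j, hj⟩ := Function.ne_iff.mp hk
  intro h
  have hkj := frequencyForm_single k j
  rw [h, zero_apply] at hkj
  exact hj (by exact_mod_cast hkj.symm)

theorem expc_eq_fourierChar (k : Fin d → ℤ) (x : Fin d → ℝ) :
    expc k x = fourierChar (frequencyForm k x) := by
  rw [fourierChar_apply, frequencyForm_apply, expc]
  push_cast
  ring_nf

theorem continuous_expc (k : Fin d → ℤ) : Continuous (expc k) := by
  unfold expc
  fun_prop

theorem norm_expc (k : Fin d → ℤ) (x : Fin d → ℝ) : ‖expc k x‖ = 1 := by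
  rw [expc_eq_fourierChar, Circle.norm_coe]

theorem expc_zero (x : Fin d → ℝ) : expc 0 x = 1 := by
  simp [expc]

theorem expc_add (k l : Fin d → ℤ) (x : Fin d → ℝ) :
    expc (k + l) x = expc k x * expc l x := by
  simp only [expc_eq_fourierChar, frequencyForm_apply, Pi.add_apply, Int.cast_add, add_mul,
    Finset.sum_add_distrib, AddChar.map_add_eq_mul, Circle.coe_mul]

theorem expc_sum {ι : Type*} (s : Finset ι) (k : ι → Fin d → ℤ) (x : Fin d → ℝ) :
    expc (∑ i ∈ s, k i) x = ∏ i ∈ s, expc (k i) x := by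
  classical
  induction s using Finset.induction_on with
  | empty => simp [expc_zero]
  | insert i s hi ih => rw [Finset.sum_insert hi, Finset.prod_insert hi, expc_add, ih]

theorem integrable_mul_expc {φ : (Fin d → ℝ) → ℂ} (hφ : Integrable φ) (k : Fin d → ℤ)
    (t : ℝ) : Integrable fun x => φ x * expc k (t • x) :=
  hφ.mul_bdd ((continuous_expc k).comp (continuous_const_smul t)).aestronglyMeasurable
    (Eventually.of_forall fun _ => (norm_expc k _).le)

/-- Riemann–Lebesgue lemma; it holds for every `φ`, as the Bochner integral of a non-integrable
function is `0`. -/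
theorem tendsto_integral_mul_expc_smul (φ : (Fin d → ℝ) → ℂ) {k : Fin d → ℤ} (hk : k ≠ 0) :
    Tendsto (fun t : ℝ => ∫ x, φ x * expc k (t • x)) (Bornology.cobounded ℝ) (nhds 0) := by
  have hnorm : 0 < ‖frequencyForm k‖ := norm_pos_iff.mpr (frequencyForm_ne_zero hk)
  have hco : Tendsto (fun t : ℝ => (-t) • frequencyForm k) (Bornology.cobounded ℝ)
      (cocompact _) := by
    rw [← Metric.cobounded_eq_cocompact, ← tendsto_norm_atTop_iff_cobounded]
    simp_rw [norm_smul, norm_neg]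
    exact (tendsto_norm_cobounded_atTop).atTop_mul_const hnorm
  refine ((tendsto_integral_exp_smul_cocompact φ volume).comp hco).congr fun t => ?_
  refine integral_congr_ae (Eventually.of_forall fun x => ?_)
  simp [expc_eq_fourierChar, Circle.smul_def, mul_comm]

theorem tendsto_integral_mul_expc_natCast_smul (φ : (Fin d → ℝ) → ℂ) (k : Fin d → ℤ) :
    Tendsto (fun n : ℕ => ∫ x, φ x * expc k ((n : ℝ) • x)) atTop
      (nhds (if k = 0 then ∫ x, φ x else 0)) := by
  split_ifs with hk
  · simp [hk, expc_zero]
  · exact (tendsto_integral_mul_expc_smul φ hk).comp tendsto_natCast_atTop_cobounded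

theorem integral_mul_prod_trigPoly {p : ℕ} {φ : (Fin d → ℝ) → ℂ} (hφ : Integrable φ)
    (F : Finset (Fin d → ℤ)) (a : Fin p → (Fin d → ℤ) → ℂ) (t : ℝ) :
    ∫ x, φ x * ∏ i, ∑ k ∈ F, a i k * expc k (t • x) =
      ∑ k ∈ Fintype.piFinset fun _ => F,
        (∏ i, a i (k i)) * ∫ x, φ x * expc (∑ i, k i) (t • x) := by
  have hexpand : ∀ x, φ x * ∏ i, ∑ k ∈ F, a i k * expc k (t • x) =
      ∑ k ∈ Fintype.piFinset fun _ => F,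
        (∏ i, a i (k i)) * (φ x * expc (∑ i, k i) (t • x)) := fun x => by
    simp_rw [Finset.prod_univ_sum, Finset.mul_sum, expc_sum, Finset.prod_mul_distrib]
    exact Finset.sum_congr rfl fun _ _ => by ring
  simp_rw [hexpand]
  rw [integral_finsetSum _ fun k _ => (integrable_mul_expc hφ _ t).const_mul _]
  simp_rw [integral_const_mul]

end

/-- Periodic version of the main theorem: for Fourier multipliers with symbols
`ψ_i` acting on a trigonometric polynomial `u`, the limit of the `p`-fold
product `∏_i (A_i u)(nx)` tested against `φ` picks out the resonant tuples of
frequencies summing to zero. -/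
theorem trigPoly_multiplier_product_limit {d p : ℕ} (F : Finset (Fin d → ℤ))
    (c : (Fin d → ℤ) → ℂ) (ψ : Fin p → (Fin d → ℤ) → ℂ)
    (φ : (Fin d → ℝ) → ℂ) (hφc : Continuous φ) (hφs : HasCompactSupport φ) :
    Tendsto
      (fun n : ℕ => ∫ x : Fin d → ℝ,
        φ x * ∏ i : Fin p, ∑ k ∈ F, c k * ψ i k * expc k ((n : ℝ) • x))
      atTop
      (nhds
        ((∑ k ∈ (Fintype.piFinset fun _ : Fin p => F).filter
            (fun k => ∑ i, k i = 0), ∏ i, c (k i) * ψ i (k i)) *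
          ∫ x : Fin d → ℝ, φ x)) := by
  have hφ : Integrable φ := hφc.integrable_of_hasCompactSupport hφs
  simp_rw [integral_mul_prod_trigPoly hφ F (fun i k => c k * ψ i k), Finset.sum_filter,
    Finset.sum_mul, ite_mul, zero_mul]
  refine tendsto_finsetSum _ fun k _ => ?_
  simpa [apply_ite] using
    (tendsto_integral_mul_expc_natCast_smul φ (∑ i, k i)).const_mul (∏ i, c (k i) * ψ i (k i))
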